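/- arXiv:1803.10634 — 2 statements merged into one kernel-verified Lean document; each statement's English description precedes it below -/
import Mathlib

section
/- Let H = ∗_{a∈A} H_a be a nontrivial free product and let B ∈ H be a simple word. If a word U with U ≡ B occurs as a subword of B^k for some positive integer k, then B^k ≡ B^m · U · B^{k−m−1} for some m ∈ {0,…,k−1}; that is, every occurrence of B as a subword of B^k is at a position that is a multiple of |B|. -/
/-!
Common definitions: we model a nontrivial free product `H = ∗_{a ∈ A} H_a` as
`Monoid.CoprodI G` for a family of groups `G : ι → Type*` with `[Nontrivial ι]`
(the index set has at least two elements) and `∀ i, Nontrivial (G i)`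
(all factors are nontrivial groups).
-/

namespace FreeProdPaper

open Monoid

variable {ι : Type*} {G : ι → Type*} [∀ i, Group (G i)]

/-- An element of a free product is *hyperbolic* if it lies in no conjugate
`g⁻¹ H_a g` of a factor. -/
def IsHyperbolic (w : CoprodI G) : Prop :=
  ∀ (i : ι) (g : CoprodI G) (x : G i), w ≠ g⁻¹ * CoprodI.of x * g

/-- The reduced form (as the list of its syllables) of an element of a free product. -/
noncomputable def redList (w : CoprodI G) : List (Σ i, G i) :=
  letI := Classical.decEq ι
  letI : ∀ i, DecidableEq (G i) := fun _ => Classical.decEq _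
  (CoprodI.Word.equiv w).toList

/-- The (syllable) length `|w|` of an element of a free product:
the number of syllables of its reduced form. -/
noncomputable def len (w : CoprodI G) : ℕ := (redList w).length

/-- The cyclic length `|w|_c`: the length of a cyclically reduced word conjugate
to `w`, equivalently the minimal length of a conjugate of `w`. -/
noncomputable def cyclicLength (w : CoprodI G) : ℕ :=
  sInf (Set.range fun g : CoprodI G => len (g⁻¹ * w * g))

/-- A word is cyclically reduced iff it is nontrivial and has minimal length in
its conjugacy class (for a reduced word of length `≥ 2` this says exactly that its
first and last syllables lie in distinct factors). -/
def IsCyclicallyReduced (w : CoprodI G) : Prop :=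
  w ≠ 1 ∧ len w = cyclicLength w

/-- `w` is a proper power: `w = h ^ n` for some `h` and some `n ≥ 2`. -/
def IsProperPower (w : CoprodI G) : Prop :=
  ∃ (h : CoprodI G) (n : ℕ), 2 ≤ n ∧ w = h ^ n

/-- A *simple* word: a cyclically reduced word of length at least two that is not
a proper power. -/
def IsSimple (w : CoprodI G) : Prop :=
  IsCyclicallyReduced w ∧ 2 ≤ len w ∧ ¬ IsProperPower w

/-- The radical length `|w|_r` of a hyperbolic element `w = f⁻¹ ⬝ A^k ∘ f`
(`A` simple, `f` reduced, `k ≥ 1`) is `|A|`; equivalently, it is the least cyclic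
length of a root of `w`. -/
noncomputable def radicalLength (w : CoprodI G) : ℕ :=
  sInf {n | ∃ (h : CoprodI G) (k : ℕ), 0 < k ∧ w = h ^ k ∧ n = cyclicLength h}

/-- `u` is a *subword* of `w`: the reduced form of `w` is `f₁ ⬝ u ⬝ f₂`,
i.e. the reduced form of `u` occurs as a contiguous sublist of the reduced form
of `w`. -/
def IsSubword (u w : CoprodI G) : Prop :=
  ∃ l₁ l₂ : List (Σ i, G i), redList w = l₁ ++ redList u ++ l₂

/-- One step of bringing a list of syllables to reduced form which does not affect
the first or the last syllable of the word: two adjacent syllables from the same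
factor, not including the first or the last syllable of the word, are merged
(or cancelled, if their product is trivial). -/
def InnerStep (L L' : List (Σ i, G i)) : Prop :=
  ∃ (l₁ l₂ : List (Σ i, G i)) (i : ι) (a b : G i),
    l₁ ≠ [] ∧ l₂ ≠ [] ∧
    L = l₁ ++ ⟨i, a⟩ :: ⟨i, b⟩ :: l₂ ∧
    ((a * b = 1 ∧ L' = l₁ ++ l₂) ∨ (a * b ≠ 1 ∧ L' = l₁ ++ ⟨i, a * b⟩ :: l₂))

/-- `EndsUnaffected L w` : the concatenation `L` of syllables (of reduced words
whose product is `w`) can be brought to the reduced form of `w` by cancellations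
and mergings none of which affects the first or the last syllable. -/
def EndsUnaffected (L : List (Σ i, G i)) (w : CoprodI G) : Prop :=
  Relation.ReflTransGen InnerStep L (redList w)

/-- The commutator as used in the paper: `[x, y] = x⁻¹ y⁻¹ x y`. -/
def pcomm {H : Type*} [Group H] (x y : H) : H := x⁻¹ * y⁻¹ * x * y

/-- The word `L₂(z₀, z₁)` from the paper. -/
def L2 {H : Type*} [Group H] (x y : H) : H :=
  pcomm (x ^ 10) (y ^ 10) ^ 5000 * x * pcomm (x ^ 10) (y ^ 10) ^ 200 * y *
    pcomm (x ^ 10) (y ^ 10) ^ 400 * x⁻¹ * pcomm (x ^ 10) (y ^ 10) ^ 600 * y⁻¹ *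
    pcomm (x ^ 10) (y ^ 10) ^ 5000

/-- The words `E_{k̲[j,0]}`: `Ew k y j` is `E_{k̲[j+1,0]}(y₀, …, y_j)`, defined by
`E_{k̲[1,0]}(z₀) = z₀^{k₀}` and
`E_{k̲[j,0]}(z₀,…,z_{j-1}) = [E_{k̲[j-1,0]}(z₀,…,z_{j-2})², z_{j-1}^{2 k_{j-1}}]`. -/
def Ew {H : Type*} [Group H] (k : ℕ → ℕ) (y : ℕ → H) : ℕ → H
  | 0 => y 0 ^ k 0
  | j + 1 => pcomm (Ew k y j ^ 2) (y (j + 1) ^ (2 * k (j + 1)))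

/-- The words `E_n`: `En y j` is `E_{j+1}(y₀, …, y_j)`, defined by
`E₂(z₀, z₁) = [z₀², z₁²]` and `E_n(z₀,…,z_{n-1}) = [E_{n-1}(z₀,…,z_{n-2})², z_{n-1}²]`. -/
def En {H : Type*} [Group H] (y : ℕ → H) : ℕ → H
  | 0 => y 0
  | j + 1 => pcomm (En y j ^ 2) (y (j + 1) ^ 2)

/-- A subgroup `K` of `Γ` is *verbally closed* if every equation
`w(x₁,…,xₙ) = h` (with `w` in the free group and `h ∈ K`) having a solution
in `Γ` also has a solution in `K`. -/
def IsVerballyClosed {Γ : Type*} [Group Γ] (K : Subgroup Γ) : Prop :=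
  ∀ (n : ℕ) (w : FreeGroup (Fin n)) (h : Γ), h ∈ K →
    (∃ x : Fin n → Γ, FreeGroup.lift x w = h) →
    ∃ y : Fin n → Γ, (∀ i, y i ∈ K) ∧ FreeGroup.lift y w = h

/-- A subgroup `K` of `Γ` is *algebraically closed in `Γ`* if every finite system
of equations `w_j(x₁,…,xₙ, K) = 1` with coefficients in `K` (i.e. `w_j` lies in
the free product of the free group `F_n` and `K`) having a solution in `Γ`
also has a solution in `K`. -/
def IsAlgebraicallyClosedIn {Γ : Type*} [Group Γ] (K : Subgroup Γ) : Prop :=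
  ∀ (n m : ℕ) (w : Fin m → Monoid.Coprod (FreeGroup (Fin n)) K),
    (∃ x : Fin n → Γ, ∀ j, Monoid.Coprod.lift (FreeGroup.lift x) K.subtype (w j) = 1) →
    ∃ y : Fin n → Γ, (∀ i, y i ∈ K) ∧
      ∀ j, Monoid.Coprod.lift (FreeGroup.lift y) K.subtype (w j) = 1
end FreeProdPaper

/-!
Since `B` is cyclically reduced, its first and last syllables lie in different factors (otherwise
conjugating by the last syllable would shorten `B`), so the reduced form of `B ^ k` is the syllable
list `L` of `B` repeated `k` times. An occurrence of `L` in `L ^ k` at an offset not divisible by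
`|L|` splits `L = u v = v u` with `u, v` nonempty. Then `L` has the periods `|u|` and `|v|`, hence,
by Fine and Wilf, the period `gcd |u| |v|`, a proper divisor of `|L|`; so `L`, and with it `B`, is a
proper power.
-/

namespace List

variable {α : Type*}

-- The case `m = 0` excludes `L = []`.
def IsPrimitive (L : List α) : Prop :=
  ∀ (z : List α) (m : ℕ), (replicate m z).flatten = L → m = 1

theorem IsPrimitive.ne_nil {L : List α} (hL : L.IsPrimitive) : L ≠ [] := by
  rintro rfl
  exact absurd (hL [] 0 rfl) zero_ne_one

theorem getElem?_flatten_replicate (z : List α) {m i : ℕ} (hi : i < m * z.length) :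
    (replicate m z).flatten[i]? = z[i % z.length]? := by
  induction m generalizing i with
  | zero => simp at hi
  | succ m ih =>
    rw [replicate_succ, flatten_cons]
    rcases lt_or_ge i z.length with hiz | hiz
    · rw [getElem?_append_left hiz, Nat.mod_eq_of_lt hiz]
    · rw [getElem?_append_right hiz, ih (by rw [Nat.succ_mul] at hi; omega),
        Nat.mod_eq_sub_mod hiz]

theorem prod_map_flatten_replicate {M : Type*} [Monoid M] (f : α → M) (z : List α) (m : ℕ) :
    ((replicate m z).flatten.map f).prod = (z.map f).prod ^ m := by
  simp [map_flatten, prod_flatten, map_replicate, prod_replicate]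

theorem HasPeriod.eq_flatten_replicate {w : List α} {p : ℕ} (hw : w.HasPeriod p) (hp : 0 < p)
    (hdvd : p ∣ w.length) : (replicate (w.length / p) (w.take p)).flatten = w := by
  rcases eq_or_ne w [] with rfl | hne
  · simp
  have htake : (w.take p).length = p := by
    rw [length_take, Nat.min_eq_left (Nat.le_of_dvd (length_pos_iff.2 hne) hdvd)]
  have hlen : w.length / p * (w.take p).length = w.length := by
    rw [htake, Nat.div_mul_cancel hdvd]
  refine ext_getElem? fun i => ?_
  rcases lt_or_ge i w.length with hi | hi
  · rw [getElem?_flatten_replicate _ (by omega), htake, getElem?_take_of_lt (Nat.mod_lt _ hp),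
      hasPeriod_iff_forall_getElem?_mod.1 hw i hi]
  · have : (replicate (w.length / p) (w.take p)).flatten.length ≤ i := by
      simp only [length_flatten, map_replicate, sum_replicate, smul_eq_mul] at hlen ⊢
      omega
    rw [getElem?_eq_none hi, getElem?_eq_none this]

theorem hasPeriod_length_left_of_append_comm {u v : List α} (h : u ++ v = v ++ u) :
    (u ++ v).HasPeriod u.length := by
  rw [HasPeriod, take_left, prefix_append_right_inj, h]
  exact prefix_append v u

theorem not_isPrimitive_of_append_comm {u v : List α} (hu : u ≠ []) (hv : v ≠ [])
    (h : u ++ v = v ++ u) : ¬ (u ++ v).IsPrimitive := by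
  intro hprim
  have hu' : 0 < u.length := length_pos_iff.2 hu
  have hv' : 0 < v.length := length_pos_iff.2 hv
  set d := u.length.gcd v.length
  have hd : 0 < d := Nat.gcd_pos_of_pos_left _ hu'
  have hper : (u ++ v).HasPeriod d := by
    refine (hasPeriod_length_left_of_append_comm h).gcd ?_ (by simp)
    rw [h]; exact hasPeriod_length_left_of_append_comm h.symm
  have hdvd : d ∣ (u ++ v).length := by
    rw [length_append]; exact dvd_add (Nat.gcd_dvd_left _ _) (Nat.gcd_dvd_right _ _)
  have hdu : d ≤ u.length := Nat.le_of_dvd hu' (Nat.gcd_dvd_left _ _)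
  have hm := hprim _ _ (hper.eq_flatten_replicate hd hdvd)
  rw [Nat.div_eq_iff_eq_mul_left hd hdvd, length_append] at hm
  omega

theorem append_comm_of_append_eq {u v t : List α} {k : ℕ} (hu : u ≠ [])
    (h : u ++ v ++ t = v ++ (replicate k (u ++ v)).flatten) : u ++ v = v ++ u := by
  cases k with
  | zero =>
    have := congrArg length h
    simp only [length_append, replicate_zero, flatten_nil, length_nil] at this
    have := length_pos_iff.2 hu
    omega
  | succ k =>
    rw [replicate_succ, flatten_cons] at h
    have h' : u ++ v ++ t = v ++ u ++ (v ++ (replicate k (u ++ v)).flatten) := by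
      simpa only [append_assoc] using h
    exact (append_inj h' (by rw [length_append, length_append, Nat.add_comm])).1

theorem IsPrimitive.eq_flatten_replicate_of_eq_append {L l₁ l₂ : List α} (hL : L.IsPrimitive)
    {k : ℕ} (h : (replicate k L).flatten = l₁ ++ L ++ l₂) :
    ∃ m < k, l₁ = (replicate m L).flatten ∧ l₂ = (replicate (k - m - 1) L).flatten := by
  induction k generalizing l₁ with
  | zero =>
    simp only [replicate_zero, flatten_nil, nil_eq, append_eq_nil_iff] at h
    exact absurd h.1.2 hL.ne_nil
  | succ k ih =>
    rw [replicate_succ, flatten_cons, append_assoc] at h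
    obtain ⟨a, rfl, hR⟩ | ⟨c, hc, rfl, hLc⟩ :
        (∃ a, l₁ = L ++ a ∧ (replicate k L).flatten = a ++ L ++ l₂) ∨
          ∃ c, c ≠ [] ∧ L = l₁ ++ c ∧ L ++ l₂ = c ++ (replicate k L).flatten := by
      rcases append_eq_append_iff.1 h with ⟨a, ha, hR⟩ | ⟨c, hLc, hc⟩
      · exact .inl ⟨a, ha, by rw [hR, append_assoc]⟩
      · rcases eq_or_ne c [] with rfl | hc'
        · exact .inl ⟨[], by simpa using hLc.symm, by simpa using hc.symm⟩
        · exact .inr ⟨c, hc', hLc, hc⟩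
    · obtain ⟨m, hm, rfl, rfl⟩ := ih hR
      exact ⟨m + 1, by omega, by rw [replicate_succ, flatten_cons], by congr 2; omega⟩
    rcases eq_or_ne l₁ [] with rfl | hl₁
    · exact ⟨0, k.succ_pos, rfl, append_cancel_left hLc⟩
    · exact absurd hL
        (not_isPrimitive_of_append_comm hl₁ hc (append_comm_of_append_eq hl₁ hLc))

end List

namespace FreeProdPaper

open Monoid

variable {ι : Type*} {G : ι → Type*} [∀ i, Group (G i)]

theorem prod_redList (w : CoprodI G) : ((redList w).map fun x => CoprodI.of x.2).prod = w := by
  classical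
  exact CoprodI.Word.equiv.symm_apply_apply w

theorem redList_ne_one (w : CoprodI G) : ∀ x ∈ redList w, x.2 ≠ 1 := by
  classical
  exact (CoprodI.Word.equiv w).ne_one

theorem isChain_redList (w : CoprodI G) : (redList w).IsChain fun x y => x.1 ≠ y.1 := by
  classical
  exact (CoprodI.Word.equiv w).chain_ne

theorem redList_prod {l : List (Σ i, G i)} (hne : ∀ x ∈ l, x.2 ≠ 1)
    (hc : l.IsChain fun x y => x.1 ≠ y.1) :
    redList (l.map fun x => CoprodI.of x.2).prod = l := by
  classical
  exact congrArg CoprodI.Word.toList (CoprodI.Word.equiv.apply_symm_apply ⟨l, hne, hc⟩)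

theorem cyclicLength_le_len_conj (w g : CoprodI G) : cyclicLength w ≤ len (g⁻¹ * w * g) :=
  Nat.sInf_le ⟨g, rfl⟩

theorem IsCyclicallyReduced.fst_ne_of_redList_eq {B : CoprodI G} (hB : IsCyclicallyReduced B)
    {x y : Σ i, G i} {t : List (Σ i, G i)} (h : redList B = x :: (t ++ [y])) : x.1 ≠ y.1 := by
  obtain ⟨i, a⟩ := x
  obtain ⟨j, b⟩ := y
  rintro (rfl : i = j)
  have hne := redList_ne_one B
  have hc := isChain_redList B
  rw [h] at hne hc
  have ht_ne : ∀ x ∈ t, x.2 ≠ 1 := fun x hx => hne x (by simp [hx])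
  have ht_chain := (List.isChain_cons.1 hc).2.left_of_append
  have ht_head : ∀ z ∈ t.head?, i ≠ z.1 := fun z hz =>
    (List.isChain_cons.1 hc).1 z (by simp [List.head?_append, Option.mem_def.1 hz])
  set T := (t.map fun x => CoprodI.of x.2).prod
  have hBT : B = CoprodI.of a * T * CoprodI.of b := by
    rw [← prod_redList B, h]; simp [T, mul_assoc]
  have hconj : (CoprodI.of b)⁻¹⁻¹ * B * (CoprodI.of b)⁻¹ = CoprodI.of (b * a) * T := by
    rw [hBT, inv_inv, map_mul]; group
  have hshort : len (CoprodI.of (b * a) * T) ≤ t.length + 1 := by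
    by_cases hba : b * a = 1
    · rw [hba, map_one, one_mul, len, redList_prod ht_ne ht_chain]
      omega
    · have hcons : CoprodI.of (b * a) * T =
          ((⟨i, b * a⟩ :: t).map fun x : Σ i, G i => CoprodI.of x.2).prod := by
        simp [T]
      rw [hcons, len, redList_prod (by simpa [hba] using ht_ne)
        (List.isChain_cons.2 ⟨ht_head, ht_chain⟩), List.length_cons]
  have hlenB : len B = t.length + 2 := by simp [len, h]
  have hmin := cyclicLength_le_len_conj B (CoprodI.of b)⁻¹
  rw [hconj] at hmin
  have hBmin := hB.2
  omega

theorem IsCyclicallyReduced.redList_pow {B : CoprodI G} (hB : IsCyclicallyReduced B)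
    (hlen : 2 ≤ len B) (k : ℕ) : redList (B ^ k) = (List.replicate k (redList B)).flatten := by
  have hL : redList B ≠ [] := List.ne_nil_of_length_pos (by unfold len at hlen; omega)
  obtain ⟨x, l, hxl⟩ := List.exists_cons_of_ne_nil hL
  obtain rfl | ⟨t, y, rfl⟩ := l.eq_nil_or_concat
  · simp [len, hxl] at hlen
  rw [List.concat_eq_append] at hxl
  have hcyc : ∀ u ∈ (redList B).getLast?, ∀ v ∈ (redList B).head?, u.1 ≠ v.1 := by
    simpa [hxl, List.getLast?_cons] using (hB.fst_ne_of_redList_eq hxl).symm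
  have hpow : B ^ k =
      (((List.replicate k (redList B)).flatten).map fun x => CoprodI.of x.2).prod := by
    rw [List.prod_map_flatten_replicate, prod_redList]
  rw [hpow, redList_prod]
  · simpa [List.mem_flatten, List.mem_replicate] using fun u _ hu => redList_ne_one B u hu
  · refine (List.isChain_flatten (by simp [hL.symm])).2
      ⟨?_, List.isChain_replicate_of_rel _ hcyc⟩
    simpa [List.mem_replicate] using fun _ => isChain_redList B

theorem IsSimple.isPrimitive_redList {B : CoprodI G} (hB : IsSimple B) :
    (redList B).IsPrimitive := by
  intro z m hz
  have hpow : B = (z.map fun x => CoprodI.of x.2).prod ^ m := by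
    rw [← prod_redList B, ← hz, List.prod_map_flatten_replicate]
  match m, hz with
  | 0, hz => simp [IsSimple, len, ← hz] at hB
  | 1, _ => rfl
  | m + 2, _ => exact absurd ⟨_, m + 2, by omega, hpow⟩ hB.2.2

theorem simple_word_occurrence_in_power_general
    {ι : Type*} {G : ι → Type*} [∀ i, Group (G i)]
    (B : Monoid.CoprodI G) (hB : IsSimple B)
    (k : ℕ)
    (l₁ l₂ : List (Σ i, G i))
    (hocc : redList (B ^ k) = l₁ ++ redList B ++ l₂) :
    ∃ m : ℕ, m < k ∧
      l₁ = (List.replicate m (redList B)).flatten ∧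
      l₂ = (List.replicate (k - m - 1) (redList B)).flatten := by
  rw [hB.1.redList_pow hB.2.1] at hocc
  exact hB.isPrimitive_redList.eq_flatten_replicate_of_eq_append hocc

/-- **Occurrences of a simple word in its powers (Lemma 1, P1).** If `B` is
simple and (a word equal syllable-by-syllable to) `B` occurs as a subword of
`B^k`, then `B^k ≡ B^m ⬝ B ⬝ B^{k-m-1}` for some `m ∈ {0,…,k-1}`: the occurrence
is at a position that is a multiple of `|B|`. -/
theorem simple_word_occurrence_in_power
    {ι : Type*} [Nontrivial ι] {G : ι → Type*} [∀ i, Group (G i)]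
    (hG : ∀ i, Nontrivial (G i))
    (B : Monoid.CoprodI G) (hB : IsSimple B)
    (k : ℕ) (hk : 0 < k)
    (l₁ l₂ : List (Σ i, G i))
    (hocc : redList (B ^ k) = l₁ ++ redList B ++ l₂) :
    ∃ m : ℕ, m < k ∧
      l₁ = (List.replicate m (redList B)).flatten ∧
      l₂ = (List.replicate (k - m - 1) (redList B)).flatten :=
  simple_word_occurrence_in_power_general B hB k l₁ l₂ hocc

end FreeProdPaper
end

section
/- Let H = ∗_{a∈A} H_a be a nontrivial free product, let a ∈ H be a reduced word, let B ∈ H be a simple word, and let k be a positive integer with k ≥ |a|/|B| + 2. If a is a hyperbolic element, then when the word B^k a B^k is brought to reduced form, its first and last syllables are not affected. -/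
/-!
Common definitions: we model a nontrivial free product `H = ∗_{a ∈ A} H_a` as
`Monoid.CoprodI G` for a family of groups `G : ι → Type*` with `[Nontrivial ι]`
(the index set has at least two elements) and `∀ i, Nontrivial (G i)`
(all factors are nontrivial groups).
-/

namespace FreeProdPaper

open Monoid

variable {ι : Type*} {G : ι → Type*} [∀ i, Group (G i)]

/-!
Let `X` be the reduced word `B^k`: it is the concatenation of `k` copies of `B`, since a
cyclically reduced word of length `≥ 2` begins and ends in different factors. Reducing
`a ++ X` cancels at most `|a|` syllables and gives `P ++ X.drop d` with `|P|, d ≤ |a|`, so in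
the context `X ++ _` this never touches the first syllable. In the second junction
`X ++ (P ++ X.drop d)`, if fewer than `|P| + |B|` syllables cancel, both ends survive because
`|X| ≥ |a| + 2|B|`. Otherwise the cancellation runs over a full period of `X`, so the periodic
word is invariant under a reflection combined with syllable inversion. Then `a` is conjugate to
a segment of the periodic word that equals its own formal inverse, so `a² = 1`. But a torsion
element of a free product lies in a conjugate of a factor, so `a` is not hyperbolic.
-/

section Segment

variable {α : Type*} {b : ℕ}

/-- A periodic word of period `b` is a function `ZMod b → α`; this is the block of its `n` letters
starting at position `i`. -/
def segment (x : ZMod b → α) (i : ZMod b) (n : ℕ) : List α :=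
  (List.range n).map fun t : ℕ => x (i + t)

@[simp]
lemma length_segment (x : ZMod b → α) (i : ZMod b) (n : ℕ) : (segment x i n).length = n := by
  simp [segment]

lemma getElem_segment (x : ZMod b → α) (i : ZMod b) (n t : ℕ) (ht : t < (segment x i n).length) :
    (segment x i n)[t] = x (i + t) := by
  simp only [segment, List.getElem_map, List.getElem_range]

lemma segment_add (x : ZMod b → α) (i : ZMod b) (m n : ℕ) :
    segment x i (m + n) = segment x i m ++ segment x (i + m) n := by
  simp only [segment, List.range_add, List.map_append, List.map_map, Function.comp_def,
    Nat.cast_add, add_assoc]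

lemma segment_comp_add_left (x : ZMod b → α) (r i : ZMod b) (n : ℕ) :
    segment (fun z => x (r + z)) i n = segment x (r + i) n := by
  simp only [segment, add_assoc]

lemma map_segment {β : Type*} (f : α → β) (x : ZMod b → α) (i : ZMod b) (n : ℕ) :
    (segment x i n).map f = segment (fun z => f (x z)) i n := by
  simp only [segment, List.map_map, Function.comp_def]

lemma reverse_segment (x : ZMod b → α) (i : ZMod b) (n : ℕ) :
    (segment x i n).reverse = segment (fun z => x (-z)) (1 - i - n) n := by
  refine List.ext_getElem (by simp) fun t h₁ h₂ => ?_
  rw [List.getElem_reverse, getElem_segment, getElem_segment]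
  simp only [length_segment] at h₁ h₂ ⊢
  congr 1
  rw [Nat.cast_sub (by omega), Nat.cast_sub (by omega)]
  ring

lemma eq_segment_of_prefix {L : List α} {x : ZMod b → α} {i : ZMod b} {n : ℕ}
    (h : L <+: segment x i n) : L = segment x i L.length := by
  have hle : L.length ≤ n := by simpa using h.length_le
  obtain ⟨R, hR⟩ := h
  rw [← Nat.add_sub_cancel' hle, segment_add] at hR
  exact List.append_inj_left hR (by simp)

lemma eq_segment_of_suffix {L : List α} {x : ZMod b → α} {i : ZMod b} {n : ℕ}
    (h : L <:+ segment x i n) : L = segment x (i + (n - L.length : ℕ)) L.length := by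
  have hle : L.length ≤ n := by simpa using h.length_le
  obtain ⟨R, hR⟩ := h
  rw [← Nat.sub_add_cancel hle, segment_add] at hR
  exact List.append_inj_right hR (by simpa using congrArg List.length hR)

lemma segment_mul (x : ZMod b → α) (i : ZMod b) (k : ℕ) :
    segment x i (k * b) = (List.replicate k (segment x i b)).flatten := by
  induction k with
  | zero => simp [segment]
  | succ k ih =>
    rw [add_mul, one_mul, segment_add, ih, List.replicate_succ', List.flatten_append]
    simp

lemma exists_flatten_replicate_eq_segment (L : List α) [NeZero L.length] (k : ℕ) :
    ∃ x : ZMod L.length → α, (List.replicate k L).flatten = segment x 0 (k * L.length) := by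
  refine ⟨fun z => L[z.val]'z.val_lt, ?_⟩
  rw [segment_mul]
  congr 2
  refine List.ext_getElem (by simp) fun t ht _ => ?_
  rw [getElem_segment]
  simp only [zero_add, ZMod.val_natCast, Nat.mod_eq_of_lt ht]

lemma apply_add_eq_of_segment_eq [NeZero b] {x y : ZMod b → α} {i j : ZMod b} {n : ℕ}
    (h : segment x i n = segment y j n) (hn : b ≤ n) (z : ZMod b) :
    x (i + z) = y (j + z) := by
  have hz : z.val < (segment x i n).length := by simpa using z.val_lt.trans_le hn
  have := getElem_segment x i n z.val hz
  rw [List.getElem_of_eq h, getElem_segment, ZMod.natCast_zmod_val] at this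
  exact this.symm

end Segment

def IsReduced (L : List (Σ i, G i)) : Prop :=
  L.IsChain (fun s t => s.1 ≠ t.1) ∧ ∀ s ∈ L, s.2 ≠ 1

def wordProd (L : List (Σ i, G i)) : CoprodI G :=
  (L.map fun s => CoprodI.of s.2).prod

def sylInv (s : Σ i, G i) : Σ i, G i := ⟨s.1, s.2⁻¹⟩

def wordInv (L : List (Σ i, G i)) : List (Σ i, G i) :=
  (L.map sylInv).reverse

@[simp]
lemma wordProd_nil : wordProd ([] : List (Σ i, G i)) = 1 := rfl

@[simp]
lemma wordProd_cons (s : Σ i, G i) (L : List (Σ i, G i)) :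
    wordProd (s :: L) = CoprodI.of s.2 * wordProd L := by
  simp [wordProd]

@[simp]
lemma wordProd_append (L₁ L₂ : List (Σ i, G i)) :
    wordProd (L₁ ++ L₂) = wordProd L₁ * wordProd L₂ := by
  simp [wordProd]

lemma wordProd_flatten_replicate (L : List (Σ i, G i)) (k : ℕ) :
    wordProd (List.replicate k L).flatten = wordProd L ^ k := by
  induction k with
  | zero => simp
  | succ k ih => rw [List.replicate_succ, List.flatten_cons, wordProd_append, ih, pow_succ']

@[simp]
lemma wordInv_append (L₁ L₂ : List (Σ i, G i)) :
    wordInv (L₁ ++ L₂) = wordInv L₂ ++ wordInv L₁ := by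
  simp [wordInv]

@[simp]
lemma length_wordInv (L : List (Σ i, G i)) : (wordInv L).length = L.length := by
  simp [wordInv]

@[simp]
lemma wordProd_wordInv (L : List (Σ i, G i)) : wordProd (wordInv L) = (wordProd L)⁻¹ := by
  induction L with
  | nil => simp [wordInv]
  | cons s L ih =>
    rw [← List.singleton_append, wordInv_append, wordProd_append, ih]
    simp [wordInv, sylInv]

lemma wordInv_segment {b : ℕ} (x : ZMod b → Σ i, G i) (j : ZMod b) (n : ℕ) :
    wordInv (segment x j n) = segment (fun z => sylInv (x (-z))) (1 - j - n) n := by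
  rw [wordInv, map_segment, reverse_segment]

lemma isReduced_append {L₁ L₂ : List (Σ i, G i)} :
    IsReduced (L₁ ++ L₂) ↔ IsReduced L₁ ∧ IsReduced L₂ ∧
      ∀ s ∈ L₁.getLast?, ∀ t ∈ L₂.head?, s.1 ≠ t.1 := by
  simp only [IsReduced, List.isChain_append, List.mem_append, or_imp, forall_and]
  tauto

lemma IsReduced.infix {L L' : List (Σ i, G i)} (h : IsReduced L) (h' : L' <:+: L) :
    IsReduced L' :=
  ⟨h.1.infix h', fun s hs => h.2 s (h'.subset hs)⟩

lemma isReduced_flatten_replicate {L : List (Σ i, G i)} (hL : IsReduced L)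
    (hends : ∀ s ∈ L.getLast?, ∀ t ∈ L.head?, s.1 ≠ t.1) (k : ℕ) :
    IsReduced (List.replicate k L).flatten := by
  induction k with
  | zero => simp [IsReduced]
  | succ k ih =>
    rw [List.replicate_succ, List.flatten_cons, isReduced_append]
    refine ⟨hL, ih, fun s hs t ht => hends s hs t ?_⟩
    rcases k with _ | k
    · simp at ht
    · rw [List.replicate_succ, List.flatten_cons] at ht
      rwa [List.head?_append_of_ne_nil _ (by rintro rfl; simp at hs)] at ht

lemma isReduced_redList (w : CoprodI G) : IsReduced (redList w) := by
  classical
  exact ⟨(CoprodI.Word.equiv w).chain_ne, (CoprodI.Word.equiv w).ne_one⟩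

lemma wordProd_redList (w : CoprodI G) : wordProd (redList w) = w := by
  classical
  exact CoprodI.Word.equiv.symm_apply_apply w

lemma redList_wordProd {L : List (Σ i, G i)} (hL : IsReduced L) : redList (wordProd L) = L := by
  classical
  have : wordProd L = CoprodI.Word.equiv.symm ⟨L, hL.2, hL.1⟩ := rfl
  rw [redList, this, Equiv.apply_symm_apply]

lemma len_wordProd {L : List (Σ i, G i)} (hL : IsReduced L) : len (wordProd L) = L.length := by
  rw [len, redList_wordProd hL]

lemma wordProd_ne_one {L : List (Σ i, G i)} (hL : IsReduced L) (hne : L ≠ []) :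
    wordProd L ≠ 1 := fun h => hne <| by
  rw [← redList_wordProd hL, h, ← wordProd_nil, redList_wordProd (by simp [IsReduced])]

lemma len_of_le_one {i : ι} (x : G i) : len (CoprodI.of x) ≤ 1 := by
  by_cases hx : x = 1
  · rw [hx, map_one, ← wordProd_nil, len_wordProd (by simp [IsReduced])]
    simp
  · have : IsReduced [(⟨i, x⟩ : Σ i, G i)] := by simp [IsReduced, hx]
    simpa using (len_wordProd this).le

/-- `U ++ V` reduces to `U₁ ++ M ++ V₂`: the suffix `C` of `U` cancels against the prefix
`wordInv C` of `V`, and the syllables `S`, `S'` (both empty or both single) merge into `M`. -/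
def AppendReduction (U V U₁ S C S' V₂ M : List (Σ i, G i)) : Prop :=
  U = U₁ ++ S ++ C ∧ V = wordInv C ++ S' ++ V₂ ∧
    S.length = M.length ∧ S'.length = M.length ∧ M.length ≤ 1 ∧
    IsReduced (U₁ ++ M ++ V₂) ∧ wordProd (U₁ ++ M ++ V₂) = wordProd U * wordProd V ∧
    ∀ c d, c ++ U₁ ≠ [] → V₂ ++ d ≠ [] →
      Relation.ReflTransGen InnerStep (c ++ U ++ V ++ d) (c ++ (U₁ ++ M ++ V₂) ++ d)

lemma appendReduction_of_isReduced {U V : List (Σ i, G i)} (h : IsReduced (U ++ V)) :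
    AppendReduction U V U [] [] [] V [] :=
  ⟨by simp, by simp [wordInv], rfl, rfl, by simp, by simpa using h, by simp,
    fun c d _ _ => by simpa using Relation.ReflTransGen.refl⟩

theorem exists_appendReduction {U V : List (Σ i, G i)} (hU : IsReduced U) (hV : IsReduced V) :
    ∃ U₁ S C S' V₂ M, AppendReduction U V U₁ S C S' V₂ M := by
  induction U using List.reverseRecOn generalizing V with
  | nil => exact ⟨_, _, _, _, _, _, appendReduction_of_isReduced (by simpa using hV)⟩
  | append_singleton U' s ih =>
    rcases V with _ | ⟨t, V'⟩
    · exact ⟨_, _, _, _, _, _, appendReduction_of_isReduced (by simpa using hU)⟩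
    obtain ⟨i, x⟩ := s
    obtain ⟨j, y⟩ := t
    by_cases hij : i = j
    swap
    · exact ⟨_, _, _, _, _, _,
        appendReduction_of_isReduced (isReduced_append.2 ⟨hU, hV, by simp [hij]⟩)⟩
    subst hij
    have hU' : IsReduced U' := hU.infix (List.prefix_append _ _).isInfix
    have hV' : IsReduced V' := hV.infix (List.suffix_cons _ _).isInfix
    by_cases hxy : x * y = 1
    · obtain ⟨U₁, S, C, S', V₂, M, rfl, rfl, hS, hS', hM, hR, hprod, hsteps⟩ := ih hU' hV'
      refine ⟨U₁, S, C ++ [⟨i, x⟩], S', V₂, M, by simp, ?_, hS, hS', hM, hR, ?_,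
        fun c d hc hd => .head ⟨c ++ U₁ ++ S ++ C, wordInv C ++ S' ++ V₂ ++ d, i, x, y,
          by simp_all, by simp_all, by simp, .inl ⟨hxy, by simp⟩⟩ (hsteps c d hc hd)⟩
      · simp [wordInv, sylInv, eq_inv_of_mul_eq_one_right hxy]
      · rw [hprod]
        simp only [wordProd_append, wordProd_cons, wordProd_nil, mul_one, mul_assoc,
          ← mul_assoc (CoprodI.of x), ← map_mul, hxy, map_one, one_mul]
    · refine ⟨U', [⟨i, x⟩], [], [⟨i, y⟩], V', [⟨i, x * y⟩], by simp, by simp [wordInv], rfl, rfl,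
        le_rfl, ?_, by simp [mul_assoc], fun c d hc hd => .single ⟨c ++ U', V' ++ d, i, x, y,
          by simpa using hc, by simpa using hd, by simp, .inr ⟨hxy, by simp⟩⟩⟩
      have hUx := (isReduced_append.1 hU).2.2
      have hyV := (isReduced_append.1 (show IsReduced ([⟨i, y⟩] ++ V') from hV)).2.2
      exact isReduced_append.2 ⟨isReduced_append.2 ⟨hU', by simp [IsReduced, hxy],
        by simpa using hUx⟩, hV', by simpa using hyV⟩

lemma len_mul_le (v w : CoprodI G) : len (v * w) ≤ len v + len w := by
  obtain ⟨U₁, S, C, S', V₂, M, hU, hV, hS, -, -, hR, hprod, -⟩ :=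
    exists_appendReduction (isReduced_redList v) (isReduced_redList w)
  rw [wordProd_redList, wordProd_redList] at hprod
  have hv := congrArg List.length hU
  have hw := congrArg List.length hV
  simp only [List.length_append] at hv hw
  rw [← hprod, len_wordProd hR, len, len]
  simp only [List.length_append]
  omega

lemma exists_eq_cons_append_singleton {α : Type*} {l : List α} (h : 2 ≤ l.length) :
    ∃ s L t, l = s :: (L ++ [t]) := by
  rcases l with _ | ⟨s, l⟩
  · simp at h
  rcases l.eq_nil_or_concat' with rfl | ⟨L, t, rfl⟩
  · simp at h
  exact ⟨s, L, t, rfl⟩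

lemma exists_eq_of_len_le_one [Nonempty ι] {w : CoprodI G} (hw : len w ≤ 1) :
    ∃ (i : ι) (x : G i), w = CoprodI.of x := by
  rcases hL : redList w with _ | ⟨⟨i, x⟩, _ | ⟨s, L⟩⟩
  · exact ⟨Classical.arbitrary ι, 1, by rw [← wordProd_redList w, hL]; simp⟩
  · exact ⟨i, x, by rw [← wordProd_redList w, hL]; simp⟩
  · rw [len, hL] at hw
    simp at hw

lemma len_conj_lt {w : CoprodI G} {i : ι} {x y : G i} {L : List (Σ i, G i)}
    (h : redList w = ⟨i, x⟩ :: (L ++ [⟨i, y⟩])) :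
    len ((CoprodI.of x)⁻¹ * w * CoprodI.of x) < len w := by
  have hL : IsReduced L := (isReduced_redList w).infix (h ▸ ⟨[⟨i, x⟩], [⟨i, y⟩], rfl⟩)
  have hw : w = CoprodI.of x * wordProd L * CoprodI.of y := by
    rw [← wordProd_redList w, h]
    simp [mul_assoc]
  have hconj : (CoprodI.of x)⁻¹ * w * CoprodI.of x = wordProd L * CoprodI.of (y * x) := by
    rw [hw, map_mul]
    group
  have hlen : len w = L.length + 2 := by simp [len, h]
  calc len ((CoprodI.of x)⁻¹ * w * CoprodI.of x)
      ≤ len (wordProd L) + len (CoprodI.of (y * x)) := hconj ▸ len_mul_le _ _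
    _ ≤ L.length + 1 := add_le_add (len_wordProd hL).le (len_of_le_one _)
    _ < len w := by omega

lemma getLast_head_ne_of_len_eq_cyclicLength {w : CoprodI G} (hw : len w = cyclicLength w)
    (h2 : 2 ≤ len w) : ∀ s ∈ (redList w).getLast?, ∀ t ∈ (redList w).head?, s.1 ≠ t.1 := by
  obtain ⟨⟨i, x⟩, L, ⟨j, y⟩, hL⟩ := exists_eq_cons_append_singleton h2
  simp only [hL, List.getLast?_cons, List.getLast?_concat, Option.getD_some, List.head?_cons,
    Option.mem_some_iff, forall_eq']
  rintro rfl
  have hconj := len_conj_lt hL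
  have : cyclicLength w ≤ len ((CoprodI.of x)⁻¹ * w * CoprodI.of x) :=
    Nat.sInf_le ⟨CoprodI.of x, rfl⟩
  omega

lemma IsHyperbolic.conj {a : CoprodI G} (ha : IsHyperbolic a) (g : CoprodI G) :
    IsHyperbolic (g⁻¹ * a * g) := fun i h x e =>
  ha i (h * g⁻¹) x (by rw [show a = g * (g⁻¹ * a * g) * g⁻¹ by group, e]; group)

theorem IsHyperbolic.pow_ne_one [Nonempty ι] {n : ℕ} (hn : 0 < n) {a : CoprodI G}
    (ha : IsHyperbolic a) : a ^ n ≠ 1 := by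
  induction hlen : len a using Nat.strong_induction_on generalizing a with
  | _ m ih =>
  obtain h | h := le_or_gt (len a) 1
  · obtain ⟨i, x, rfl⟩ := exists_eq_of_len_le_one h
    exact absurd (by group) (ha i 1 x)
  obtain ⟨⟨i, x⟩, L, ⟨j, y⟩, hL⟩ := exists_eq_cons_append_singleton h
  by_cases hij : i = j
  · subst hij
    intro hpow
    refine ih _ (hlen ▸ len_conj_lt hL) (ha.conj _) rfl ?_
    simpa [hpow] using conj_pow (a := (CoprodI.of x)⁻¹) (b := a) (i := n)
  · have hred := isReduced_flatten_replicate (isReduced_redList a)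
      (by simp [hL, List.getLast?_cons, Ne.symm hij]) n
    rw [← wordProd_redList a, ← wordProd_flatten_replicate]
    exact wordProd_ne_one hred (by simp [hL, hn.ne'])

lemma exists_reduced_append_of_length_lt {U V : List (Σ i, G i)} (hU : IsReduced U)
    (hV : IsReduced V) (hUV : U.length < V.length) :
    ∃ (P : List (Σ i, G i)) (e : ℕ), e ≤ U.length ∧ P.length ≤ U.length ∧
      IsReduced (P ++ V.drop e) ∧ wordProd (P ++ V.drop e) = wordProd U * wordProd V ∧
      ∀ c, c ≠ [] → Relation.ReflTransGen InnerStep (c ++ U ++ V) (c ++ (P ++ V.drop e)) := by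
  obtain ⟨U₁, S, C, S', V₂, M, rfl, rfl, hS, hS', -, hR, hprod, hsteps⟩ :=
    exists_appendReduction hU hV
  have hV₂ : (wordInv C ++ S' ++ V₂).drop (C.length + S'.length) = V₂ :=
    List.drop_left' (by simp)
  simp only [List.length_append, length_wordInv] at hUV
  refine ⟨U₁ ++ M, C.length + S'.length, by simp; omega, by simp; omega, by rwa [hV₂],
    by rw [hV₂, hprod], fun c hc => ?_⟩
  rw [hV₂]
  simpa using hsteps c [] (by simp [hc]) (by simpa using List.ne_nil_of_length_pos (by omega))

lemma exists_reduced_append_cancel {U V : List (Σ i, G i)} (hU : IsReduced U)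
    (hV : IsReduced V) :
    ∃ C R : List (Σ i, G i), C <:+ U ∧ wordInv C <+: V ∧
      IsReduced R ∧ wordProd R = wordProd U * wordProd V ∧
      (C.length + 1 < U.length → C.length + 1 < V.length →
        Relation.ReflTransGen InnerStep (U ++ V) R) := by
  obtain ⟨U₁, S, C, S', V₂, M, rfl, rfl, hS, hS', hM, hR, hprod, hsteps⟩ :=
    exists_appendReduction hU hV
  refine ⟨C, U₁ ++ M ++ V₂, List.suffix_append _ _, ⟨S' ++ V₂, by simp⟩, hR, hprod,
    fun hCU hCV => ?_⟩
  simp only [List.length_append, length_wordInv] at hCU hCV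
  simpa using hsteps [] [] (by simpa using List.ne_nil_of_length_pos (by omega))
    (by simpa using List.ne_nil_of_length_pos (by omega))

theorem mul_self_eq_one_of_deep_cancel {b : ℕ} [NeZero b] {x : ZMod b → Σ i, G i} {N d : ℕ}
    {X P C : List (Σ i, G i)} {a : CoprodI G} (hX : X = segment x 0 N) (hN : (N : ZMod b) = 0)
    (hd : d ≤ N) (ha : wordProd (P ++ X.drop d) = a * wordProd X) (hC : C <:+ X)
    (hCP : wordInv C <+: P ++ X.drop d) (hdeep : P.length + b ≤ C.length) : a * a = 1 := by
  set p := P.length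
  set x' : ZMod b → Σ i, G i := fun z => sylInv (x (-z))
  have hsplit : X = segment x 0 d ++ segment x d (N - d) := by
    rw [hX, ← zero_add (d : ZMod b), ← segment_add, Nat.add_sub_cancel' hd]
  have hdrop : X.drop d = segment x d (N - d) := by rw [hsplit, List.drop_left' (by simp)]
  have hCseg : C = segment x (-C.length) C.length := by
    have hCN : C.length ≤ N := by simpa [hX] using hC.length_le
    rw [hX] at hC
    have := eq_segment_of_suffix hC
    rwa [zero_add, Nat.cast_sub hCN, hN, zero_sub] at this
  have hinvC : wordInv C = segment x' 1 p ++ segment x' (1 + p) (C.length - p) := by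
    rw [← segment_add, Nat.add_sub_cancel' (by omega), hCseg, wordInv_segment, length_segment]
    congr 1
    ring
  obtain ⟨R, hR⟩ := hCP
  rw [hinvC, hdrop, List.append_assoc] at hR
  obtain ⟨hP, hQ⟩ := List.append_inj hR (by simp [p])
  have hwin := apply_add_eq_of_segment_eq (by simpa using eq_segment_of_prefix ⟨R, hQ⟩)
    (by omega)
  -- the cancellation beyond `P` spans a full period, so it pins down `x` at every position
  have hsym : ∀ z, x' z = x (d - 1 - p + z) := fun z => by
    convert hwin (z - 1 - p) using 2 <;> ring
  have hinvP : wordInv (segment x (-p) p) = P := by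
    rw [← hP, wordInv_segment]
    congr 1
    ring
  have hZ : wordInv (segment x (-p) p ++ segment x 0 d) = segment x (-p) p ++ segment x 0 d := by
    rw [← neg_add_cancel (p : ZMod b), ← segment_add, wordInv_segment]
    simp only [x'] at hsym
    simp only [hsym, segment_comp_add_left]
    congr 1
    push_cast
    ring
  have ha' : (wordProd (segment x (-p) p))⁻¹ * (wordProd (segment x 0 d))⁻¹ = a := by
    rw [hdrop, hsplit, wordProd_append, wordProd_append, ← mul_assoc, mul_left_inj,
      ← hinvP, wordProd_wordInv] at ha
    rw [ha, mul_inv_cancel_right]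
  have hZsq := congrArg wordProd hZ
  rw [wordProd_wordInv, wordProd_append] at hZsq
  set e := wordProd (segment x (-p) p)
  set q := wordProd (segment x 0 d)
  calc a * a = e⁻¹ * (e * q)⁻¹ * q⁻¹ := by rw [← ha']; group
    _ = 1 := by rw [hZsq]; group

lemma add_two_mul_le_mul_of_div_add_two_le {m b k : ℕ} (hb : 0 < b)
    (h : (m : ℚ) / b + 2 ≤ k) : m + 2 * b ≤ k * b := by
  have hb' : (0 : ℚ) < b := by exact_mod_cast hb
  rw [div_add' _ _ _ hb'.ne', div_le_iff₀ hb'] at h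
  exact_mod_cast h

theorem ends_unaffected_of_hyperbolic_general
    {ι : Type*} [Nontrivial ι] {G : ι → Type*} [∀ i, Group (G i)]
    (a B : Monoid.CoprodI G) (hB : IsSimple B)
    (k : ℕ)
    (hkq : (len a : ℚ) / (len B : ℚ) + 2 ≤ (k : ℚ))
    (ha : IsHyperbolic a) :
    EndsUnaffected
      ((List.replicate k (redList B)).flatten ++ redList a ++
        (List.replicate k (redList B)).flatten)
      (B ^ k * a * B ^ k) := by
  obtain ⟨⟨-, hcyc⟩, hB2, -⟩ := hB
  have hab := add_two_mul_le_mul_of_div_add_two_le (by omega) hkq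
  set X := (List.replicate k (redList B)).flatten
  have hX : IsReduced X := isReduced_flatten_replicate (isReduced_redList B)
    (getLast_head_ne_of_len_eq_cyclicLength hcyc hB2) k
  have hXlen : X.length = k * len B := by simp [X, len]
  have : NeZero (redList B).length := ⟨by unfold len at hB2; omega⟩
  obtain ⟨x, hXseg⟩ := exists_flatten_replicate_eq_segment (redList B) k
  obtain ⟨P, e, he, hP, hW, hWprod, hstepsA⟩ := exists_reduced_append_of_length_lt
    (isReduced_redList a) hX (by rw [hXlen]; change len a < _; omega)
  change e ≤ len a at he
  change P.length ≤ len a at hP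
  obtain ⟨C, R, hCX, hCW, hR, hRprod, hstepsB⟩ := exists_reduced_append_cancel hX hW
  have hshallow : C.length < P.length + len B := by
    by_contra! hdeep
    refine ha.pow_ne_one two_pos (pow_two a ▸ mul_self_eq_one_of_deep_cancel hXseg (by simp)
      (by change e ≤ k * len B; omega) (by rw [hWprod, wordProd_redList]) hCX hCW hdeep)
  have hRw : redList (B ^ k * a * B ^ k) = R := by
    rw [← redList_wordProd hR, hRprod, hWprod, wordProd_redList, wordProd_flatten_replicate,
      wordProd_redList, mul_assoc]
  have hWlen : (P ++ X.drop e).length = P.length + (k * len B - e) := by simp [hXlen]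
  show Relation.ReflTransGen InnerStep _ _
  rw [hRw]
  exact (hstepsA X (List.ne_nil_of_length_pos (by omega))).trans (hstepsB (by omega) (by omega))

/-- **Corollary 1, part 1.** Let `a` be a reduced word, `B` a simple word and `k`
a positive integer with `k ≥ |a|/|B| + 2`. If `a` is hyperbolic, then when the
word `B^k a B^k` is brought to reduced form, its first and last syllables are
not affected. -/
theorem ends_unaffected_of_hyperbolic
    {ι : Type*} [Nontrivial ι] {G : ι → Type*} [∀ i, Group (G i)]
    (hG : ∀ i, Nontrivial (G i))
    (a B : Monoid.CoprodI G) (hB : IsSimple B)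
    (k : ℕ) (hk : 0 < k)
    (hkq : (len a : ℚ) / (len B : ℚ) + 2 ≤ (k : ℚ))
    (ha : IsHyperbolic a) :
    EndsUnaffected
      ((List.replicate k (redList B)).flatten ++ redList a ++
        (List.replicate k (redList B)).flatten)
      (B ^ k * a * B ^ k) :=
  ends_unaffected_of_hyperbolic_general a B hB k hkq ha

end FreeProdPaper
end
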